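/- arXiv:1606.04309 — 7 statements merged into one kernel-verified Lean document; each statement's English description precedes it below -/
import Mathlib

section
/- For every y ∈ E and t > s > 0 there holds σ(Γ_s^t(y)) ≤ C(n) (t/s)^n, where C(n) depends only on the dimension n. -/
open MeasureTheory Metric Set ENNReal

noncomputable section

abbrev Rn (n : ℕ) := EuclideanSpace ℝ (Fin n)

variable {n : ℕ}

/-- The cone Γ(y) = {x ∈ ℝⁿ \ E : |x-y| < 2 d(x,E)}. -/
def coneAt (E : Set (Rn n)) (y : Rn n) : Set (Rn n) :=
  {x | x ∉ E ∧ dist x y < 2 * infDist x E}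

/-- The measure σ(A) = ∫_A d(x,E)^{-n} dm_n on ℝⁿ \ E. -/
def sigmaE (E : Set (Rn n)) : Measure (Rn n) :=
  (volume.withDensity fun x => ENNReal.ofReal ((infDist x E ^ n)⁻¹)).restrict Eᶜ

/-- Size condition on the kernel. -/
def KernelSize (E : Set (Rn n)) (S : Rn n → Rn n → ℂ) (m α K₁ : ℝ) : Prop :=
  ∀ x ∉ E, ∀ y ∈ E, ‖S x y‖ ≤ K₁ * dist x y ^ (-(m + α))

/-- Hölder condition in the second variable. -/
def KernelHolder (E : Set (Rn n)) (S : Rn n → Rn n → ℂ) (m α β K₂ : ℝ) : Prop :=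
  ∀ x ∉ E, ∀ y ∈ E, ∀ y' ∈ E, dist y y' ≤ dist x y / 2 →
    ‖S x y - S x y'‖ ≤ K₂ * dist y y' ^ β * dist x y ^ (-(m + α + β))

/-- μ is a measure of order m in E with constant C₀. -/
def OrderM (E : Set (Rn n)) (μ : Measure (Rn n)) (m C₀ : ℝ) : Prop :=
  μ Eᶜ = 0 ∧ ∀ y ∈ E, ∀ r : ℝ, 0 < r → μ (ball y r) ≤ ENNReal.ofReal (C₀ * r ^ m)

/-- Square function of f (w.r.t. μ and kernel S) with the integration in the cone
variable over a set A: (∫_A |T_μ f(x)|² d(x,E)^{2α} dσ(x))^{1/2}, ℝ≥0∞-valued. -/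
def coneSFOn (E : Set (Rn n)) (S : Rn n → Rn n → ℂ) (α : ℝ) (μ : Measure (Rn n))
    (f : Rn n → ℂ) (A : Set (Rn n)) : ℝ≥0∞ :=
  (∫⁻ x in A, (‖∫ z in E, S x z * f z ∂μ‖₊ : ℝ≥0∞) ^ 2
      * ENNReal.ofReal (infDist x E ^ (2 * α)) ∂(sigmaE E)) ^ (1/2 : ℝ)

/-- Radial maximal function M^m(|f|μ)(y). -/
def radialMax (m : ℝ) (μ : Measure (Rn n)) (f : Rn n → ℂ) (y : Rn n) : ℝ≥0∞ :=
  ⨆ (r : ℝ) (_ : 0 < r), (∫⁻ z in ball y r, (‖f z‖₊ : ℝ≥0∞) ∂μ) / ENNReal.ofReal (r ^ m)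

/-- (a,b)-doubling closed ball. -/
def DoublingCB (μ : Measure (Rn n)) (a b : ℝ) (y : Rn n) (r : ℝ) : Prop :=
  μ (closedBall y (a * r)) ≤ ENNReal.ofReal b * μ (closedBall y r)

/-- κ-small boundary for a (closed) ball. -/
def SmallBoundaryCB (μ : Measure (Rn n)) (κ : ℝ) (y : Rn n) (r : ℝ) : Prop :=
  ∀ s ∈ Icc (0:ℝ) 1,
    μ {x | r * (1 - s) < dist x y ∧ dist x y < r * (1 + s)}
      ≤ ENNReal.ofReal (κ * s) * μ (closedBall y (3 * r))

/- On the truncated cone Γ_s^t(y) the density d(x,E)^{-n} of σ is at most s^{-n}, while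
`|x - y| < 2 d(x,E) ≤ 2t` puts the whole cone inside the ball B(y, 2t). Hence
σ(Γ_s^t(y)) ≤ s^{-n} m_n(B(y, 2t)) = 2^n m_n(B(0,1)) (t/s)^n. -/

theorem MeasureTheory.Measure.withDensity_apply_le_mul {α : Type*} [MeasurableSpace α]
    {μ : Measure α} [SFinite μ] {f : α → ℝ≥0∞} {A : Set α} {c : ℝ≥0∞}
    (hf : ∀ x ∈ A, f x ≤ c) : μ.withDensity f A ≤ c * μ A := by
  rw [withDensity_apply' f A, ← setLIntegral_const]
  exact setLIntegral_mono measurable_const hf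

theorem sigmaE_le_of_le_infDist {E A : Set (Rn n)} {s : ℝ} (hs : 0 < s)
    (hA : ∀ x ∈ A, s ≤ infDist x E) :
    sigmaE E A ≤ ENNReal.ofReal ((s ^ n)⁻¹) * volume A :=
  (Measure.restrict_le_self A).trans <| Measure.withDensity_apply_le_mul fun x hx =>
    ENNReal.ofReal_le_ofReal <| inv_anti₀ (pow_pos hs n) (pow_le_pow_left₀ hs.le (hA x hx) n)

theorem coneAt_inter_infDist_le_subset_ball (E : Set (Rn n)) (y : Rn n) (t : ℝ) :
    {x ∈ coneAt E y | infDist x E ≤ t} ⊆ ball y (2 * t) :=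
  fun _ ⟨⟨_, hcone⟩, hle⟩ => mem_ball.2 (hcone.trans_le (by linarith))

/-- σ(Γ_s^t(y)) ≤ C(n) (t/s)^n. -/
theorem statement5 (n : ℕ) :
    ∃ C > 0, ∀ (E : Set (Rn n)), IsClosed E → ∀ y ∈ E, ∀ s t : ℝ, 0 < s → s < t →
      sigmaE E {x ∈ coneAt E y | s < infDist x E ∧ infDist x E ≤ t}
        ≤ ENNReal.ofReal (C * (t / s) ^ n) := by
  set V := (volume (ball (0 : Rn n) 1)).toReal
  have hV : ENNReal.ofReal V = volume (ball (0 : Rn n) 1) :=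
    ofReal_toReal measure_ball_lt_top.ne
  refine ⟨2 ^ n * V, mul_pos (by positivity) (toReal_pos (measure_ball_pos _ _ one_pos).ne'
    measure_ball_lt_top.ne), fun E _ y _ s t hs hst => ?_⟩
  have ht : 0 < t := hs.trans hst
  have hcone_subset_ball : {x ∈ coneAt E y | s < infDist x E ∧ infDist x E ≤ t} ⊆
      ball y (2 * t) :=
    fun x hx => coneAt_inter_infDist_le_subset_ball E y t ⟨hx.1, hx.2.2⟩
  calc sigmaE E {x ∈ coneAt E y | s < infDist x E ∧ infDist x E ≤ t}
      ≤ ENNReal.ofReal ((s ^ n)⁻¹) * volume (ball y (2 * t)) :=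
        (sigmaE_le_of_le_infDist hs fun x hx => hx.2.1.le).trans
          (mul_le_mul_right (measure_mono hcone_subset_ball) _)
    _ = ENNReal.ofReal (2 ^ n * V * (t / s) ^ n) := by
        rw [Measure.addHaar_ball_of_pos _ _ (by positivity), finrank_euclideanSpace_fin, ← hV,
          ← ENNReal.ofReal_mul (by positivity), ← ENNReal.ofReal_mul (by positivity)]
        congr 1
        rw [div_pow, mul_pow]
        field_simp
end
end

section
/- Let s, t > 0. Then for every y ∈ E and r > 0 there holds ∫_{Γ(y)} d(x,E)^s / (d(x,E) + r)^{s+t} dσ(x) ≤ C(s,t,n) r^{−t}, where C(s,t,n) depends only on s, t and the dimension n. -/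
open MeasureTheory Metric Set ENNReal

noncomputable section

variable {n : ℕ}

/-!
On the cone `Γ(y)` the distance `d = d(x,E)` is comparable to `ρ = |x - y|`, namely `d ≤ ρ < 2d`,
so the integrand together with the density `d⁻ⁿ` of `σ` is bounded by
`2ⁿ 2^(s+t) ρ^(s-n) (ρ+r)^(-(s+t))`. Integrating this radial function over `ℝⁿ \ {y}` in polar
coordinates leaves `∫₀^∞ ρ^(s-1) (ρ+r)^(-(s+t)) dρ`, which is at most `r^(-t)/s` on `(0, r]`
(where `ρ + r ≥ r`) and at most `r^(-t)/t` on `(r, ∞)` (where `ρ + r ≥ ρ`).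
-/

lemma setLIntegral_Ioc_zero_rpow_sub_one {s r : ℝ} (hs : 0 < s) (hr : 0 ≤ r) :
    ∫⁻ ρ in Ioc 0 r, ENNReal.ofReal (ρ ^ (s - 1)) = ENNReal.ofReal (r ^ s / s) := by
  have hint : IntegrableOn (fun ρ : ℝ ↦ ρ ^ (s - 1)) (Ioc 0 r) :=
    (intervalIntegral.intervalIntegrable_rpow' (by linarith)).1
  rw [← ofReal_integral_eq_lintegral_ofReal hint
    (ae_restrict_of_forall_mem measurableSet_Ioc fun ρ hρ ↦ Real.rpow_nonneg hρ.1.le _),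
    ← intervalIntegral.integral_of_le hr, integral_rpow (.inl (by linarith)), sub_add_cancel,
    Real.zero_rpow hs.ne', sub_zero]

lemma setLIntegral_Ioi_rpow_neg_one_sub {t r : ℝ} (ht : 0 < t) (hr : 0 < r) :
    ∫⁻ ρ in Ioi r, ENNReal.ofReal (ρ ^ (-1 - t)) = ENNReal.ofReal (r ^ (-t) / t) := by
  rw [← ofReal_integral_eq_lintegral_ofReal (integrableOn_Ioi_rpow_of_lt (by linarith) hr)
    (ae_restrict_of_forall_mem measurableSet_Ioi fun ρ hρ ↦ Real.rpow_nonneg (hr.trans hρ).le _),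
    integral_Ioi_rpow_of_lt (by linarith) hr, show -1 - t + 1 = -t by ring, neg_div_neg_eq]

lemma setLIntegral_Ioi_zero_rpow_sub_one_div_add_rpow_le {s t r : ℝ} (hs : 0 < s) (ht : 0 < t)
    (hr : 0 < r) :
    ∫⁻ ρ in Ioi 0, ENNReal.ofReal (ρ ^ (s - 1) / (ρ + r) ^ (s + t))
      ≤ ENNReal.ofReal ((1 / s + 1 / t) * r ^ (-t)) := by
  rw [← Ioc_union_Ioi_eq_Ioi hr.le, lintegral_union measurableSet_Ioi Ioc_disjoint_Ioi_same]
  have near : ∫⁻ ρ in Ioc 0 r, ENNReal.ofReal (ρ ^ (s - 1) / (ρ + r) ^ (s + t))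
      ≤ ENNReal.ofReal (r ^ (-t) / s) :=
    calc _ ≤ ∫⁻ ρ in Ioc 0 r,
            ENNReal.ofReal (ρ ^ (s - 1)) * ENNReal.ofReal (r ^ (-(s + t))) := by
          refine setLIntegral_mono' measurableSet_Ioc fun ρ hρ ↦ ?_
          rw [← ENNReal.ofReal_mul (Real.rpow_nonneg hρ.1.le _), Real.rpow_neg hr.le,
            ← div_eq_mul_inv]
          have := Real.rpow_nonneg hρ.1.le (s - 1)
          gcongr
          linarith [hρ.1]
      _ = ENNReal.ofReal (r ^ (-t) / s) := by
          rw [lintegral_mul_const' _ _ ENNReal.ofReal_ne_top,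
            setLIntegral_Ioc_zero_rpow_sub_one hs hr.le, ← ENNReal.ofReal_mul (by positivity),
            div_mul_eq_mul_div, ← Real.rpow_add hr]
          ring_nf
  have far : ∫⁻ ρ in Ioi r, ENNReal.ofReal (ρ ^ (s - 1) / (ρ + r) ^ (s + t))
      ≤ ENNReal.ofReal (r ^ (-t) / t) := by
    refine le_of_le_of_eq (setLIntegral_mono' measurableSet_Ioi fun ρ hρ ↦ ?_)
      (setLIntegral_Ioi_rpow_neg_one_sub ht hr)
    have hρ₀ : 0 < ρ := hr.trans hρ
    calc ENNReal.ofReal (ρ ^ (s - 1) / (ρ + r) ^ (s + t))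
        ≤ ENNReal.ofReal (ρ ^ (s - 1) / ρ ^ (s + t)) := by
          have := Real.rpow_nonneg hρ₀.le (s - 1)
          gcongr
          linarith
      _ = ENNReal.ofReal (ρ ^ (-1 - t)) := by rw [← Real.rpow_sub hρ₀]; ring_nf
  calc _ ≤ ENNReal.ofReal (r ^ (-t) / s) + ENNReal.ofReal (r ^ (-t) / t) := add_le_add near far
    _ = ENNReal.ofReal ((1 / s + 1 / t) * r ^ (-t)) := by
        rw [← ENNReal.ofReal_add (by positivity) (by positivity)]
        ring_nf

section Polar

variable {F : Type*} [NormedAddCommGroup F] [NormedSpace ℝ F] [MeasurableSpace F] [BorelSpace F]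
  [FiniteDimensional ℝ F] (μ : Measure F) [μ.IsAddHaarMeasure]

lemma setLIntegral_compl_zero_fun_norm {f : ℝ → ℝ≥0∞} (hf : Measurable f) :
    ∫⁻ x in {0}ᶜ, f ‖x‖ ∂μ = μ.toSphere univ *
      ∫⁻ ρ in Ioi 0, ENNReal.ofReal (ρ ^ (Module.finrank ℝ F - 1)) * f ρ := by
  have hf' : Measurable fun ρ : Ioi (0 : ℝ) ↦ f ρ := hf.comp measurable_subtype_coe
  have polar := μ.measurePreserving_homeomorphUnitSphereProd.lintegral_comp_emb
    (Homeomorph.measurableEmbedding _) (fun p ↦ f p.2)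
  simp only [homeomorphUnitSphereProd_apply_snd_coe] at polar
  rw [← lintegral_subtype_comap (measurableSet_singleton 0).compl, polar,
    lintegral_prod (fun p : sphere (0 : F) 1 × Ioi (0 : ℝ) ↦ f p.2)
      (hf'.comp measurable_snd).aemeasurable]
  simp only [lintegral_const, Measure.volumeIoiPow]
  rw [mul_comm, lintegral_withDensity_eq_lintegral_mul _ (by fun_prop) hf',
    ← lintegral_subtype_comap measurableSet_Ioi]
  rfl

lemma setLIntegral_compl_singleton_fun_dist (y : F) {f : ℝ → ℝ≥0∞} (hf : Measurable f) :
    ∫⁻ x in {y}ᶜ, f (dist x y) ∂μ = μ.toSphere univ *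
      ∫⁻ ρ in Ioi 0, ENNReal.ofReal (ρ ^ (Module.finrank ℝ F - 1)) * f ρ := by
  rw [← setLIntegral_compl_zero_fun_norm μ hf,
    ← (measurePreserving_sub_right μ y).setLIntegral_comp_preimage_emb
      (measurableEmbedding_subRight y) (fun x ↦ f ‖x‖)]
  have : (· - y) ⁻¹' {0} = {y} := by ext; simp [sub_eq_zero]
  simp [dist_eq_norm, this]

end Polar

lemma rpow_div_add_rpow_div_pow_le {d ρ r s t : ℝ} (n : ℕ) (hd : 0 < d) (hdρ : d ≤ ρ)
    (hρd : ρ ≤ 2 * d) (hr : 0 ≤ r) (hs : 0 ≤ s) (ht : 0 ≤ t) :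
    d ^ s / (d + r) ^ (s + t) / d ^ n
      ≤ 2 ^ n * 2 ^ (s + t) * (ρ ^ s / (ρ + r) ^ (s + t) / ρ ^ n) := by
  have hρ : 0 < ρ := hd.trans_le hdρ
  calc d ^ s / (d + r) ^ (s + t) / d ^ n ≤ ρ ^ s / ((ρ + r) / 2) ^ (s + t) / (ρ / 2) ^ n := by
        have := Real.rpow_nonneg hd.le s
        gcongr <;> linarith
    _ = _ := by
        rw [Real.div_rpow (by positivity) zero_le_two, div_pow]
        field_simp

lemma isOpen_coneAt {E : Set (Rn n)} (hE : IsClosed E) (y : Rn n) : IsOpen (coneAt E y) :=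
  hE.isOpen_compl.inter <| isOpen_lt (continuous_id.dist continuous_const)
    (continuous_const.mul (continuous_infDist_pt E))

lemma coneAt_eq_empty_of_subsingleton [Subsingleton (Rn n)] {E : Set (Rn n)} {y : Rn n}
    (hy : y ∈ E) : coneAt E y = ∅ :=
  eq_empty_of_forall_notMem fun x hx ↦ hx.1 (Subsingleton.elim y x ▸ hy)

lemma setLIntegral_coneAt_sigmaE_le {E : Set (Rn n)} (hE : IsClosed E) {y : Rn n} (hy : y ∈ E)
    {r s t : ℝ} (hr : 0 ≤ r) (hs : 0 ≤ s) (ht : 0 ≤ t) :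
    ∫⁻ x in coneAt E y, ENNReal.ofReal (infDist x E ^ s / (infDist x E + r) ^ (s + t)) ∂sigmaE E
      ≤ ENNReal.ofReal (2 ^ n * 2 ^ (s + t)) * ∫⁻ x in {y}ᶜ,
          ENNReal.ofReal (dist x y ^ s / (dist x y + r) ^ (s + t) / dist x y ^ n) := by
  have hcone := (isOpen_coneAt hE y).measurableSet
  have hd : Continuous fun x : Rn n ↦ infDist x E := continuous_infDist_pt E
  rw [sigmaE, Measure.restrict_restrict hcone, inter_eq_left.2 fun x hx ↦ hx.1,
    restrict_withDensity hcone,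
    lintegral_withDensity_eq_lintegral_mul _ (by fun_prop) (by fun_prop),
    ← lintegral_const_mul _ (by fun_prop)]
  refine (setLIntegral_mono' hcone fun x ⟨hxE, hxy⟩ ↦ ?_).trans
    (lintegral_mono_set fun x hx (hxy : x = y) ↦ hx.1 (hxy ▸ hy))
  have hpos : 0 < infDist x E := (hE.notMem_iff_infDist_pos ⟨y, hy⟩).1 hxE
  simp only [Pi.mul_apply]
  rw [← ENNReal.ofReal_mul (by positivity), ← ENNReal.ofReal_mul (by positivity), mul_comm,
    ← div_eq_mul_inv]
  exact ENNReal.ofReal_le_ofReal <| rpow_div_add_rpow_div_pow_le n hpos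
    (infDist_le_dist_of_mem hy) hxy.le hr hs ht

lemma pow_pred_mul_rpow_div_pow {ρ : ℝ} (hρ : 0 < ρ) {n : ℕ} (hn : n ≠ 0) (a b : ℝ) :
    ρ ^ (n - 1) * (ρ ^ a / b / ρ ^ n) = ρ ^ (a - 1) / b := by
  obtain ⟨m, rfl⟩ := Nat.exists_eq_add_one_of_ne_zero hn
  rw [Nat.add_sub_cancel, pow_succ, Real.rpow_sub_one hρ.ne']
  field_simp

/-- ∫_{Γ(y)} d(x,E)^s / (d(x,E)+r)^{s+t} dσ(x) ≤ C(s,t,n) r^{−t}. -/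
theorem statement6 (n : ℕ) (s t : ℝ) (hs : 0 < s) (ht : 0 < t) :
    ∃ C > 0, ∀ (E : Set (Rn n)), IsClosed E → ∀ y ∈ E, ∀ r : ℝ, 0 < r →
      ∫⁻ x in coneAt E y,
          ENNReal.ofReal (infDist x E ^ s / (infDist x E + r) ^ (s + t)) ∂(sigmaE E)
        ≤ ENNReal.ofReal (C * r ^ (-t)) := by
  obtain rfl | hn := n.eq_zero_or_pos
  · exact ⟨1, one_pos, fun E _ y hy r _ ↦ by simp [coneAt_eq_empty_of_subsingleton hy]⟩
  have : NeZero n := ⟨hn.ne'⟩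
  set S := (volume : Measure (Rn n)).toSphere univ
  have hS : 0 < S.toReal :=
    ENNReal.toReal_pos (Measure.measure_univ_ne_zero.2 (Measure.toSphere_ne_zero _))
      (measure_ne_top _ _)
  refine ⟨2 ^ n * 2 ^ (s + t) * S.toReal * (1 / s + 1 / t), by positivity,
    fun E hE y hy r hr ↦ ?_⟩
  calc _ ≤ ENNReal.ofReal (2 ^ n * 2 ^ (s + t)) * ∫⁻ x in {y}ᶜ,
          ENNReal.ofReal (dist x y ^ s / (dist x y + r) ^ (s + t) / dist x y ^ n) :=
        setLIntegral_coneAt_sigmaE_le hE hy hr.le hs.le ht.le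
    _ = ENNReal.ofReal (2 ^ n * 2 ^ (s + t)) *
          (S * ∫⁻ ρ in Ioi 0, ENNReal.ofReal (ρ ^ (s - 1) / (ρ + r) ^ (s + t))) := by
        rw [setLIntegral_compl_singleton_fun_dist _ y
          (f := fun ρ ↦ ENNReal.ofReal (ρ ^ s / (ρ + r) ^ (s + t) / ρ ^ n)) (by fun_prop),
          finrank_euclideanSpace_fin]
        congr 2
        refine setLIntegral_congr_fun measurableSet_Ioi fun ρ (hρ : 0 < ρ) ↦ ?_
        rw [← ENNReal.ofReal_mul (by positivity), pow_pred_mul_rpow_div_pow hρ hn.ne']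
    _ ≤ ENNReal.ofReal (2 ^ n * 2 ^ (s + t)) *
          (S * ENNReal.ofReal ((1 / s + 1 / t) * r ^ (-t))) := by
        gcongr
        exact setLIntegral_Ioi_zero_rpow_sub_one_div_add_rpow_le hs ht hr
    _ = ENNReal.ofReal (2 ^ n * 2 ^ (s + t) * S.toReal * (1 / s + 1 / t) * r ^ (-t)) := by
        conv_lhs => rw [← ENNReal.ofReal_toReal (a := S) (measure_ne_top _ univ)]
        rw [← ENNReal.ofReal_mul hS.le, ← ENNReal.ofReal_mul (by positivity)]
        ring_nf
end
end

section
/- Let μ be a Radon measure on ℝⁿ and let κ be a big enough constant depending only on the dimension n. Suppose B(x,r) is a ball (open or closed) in ℝⁿ. Then there exists R ∈ [r, 1.2r] such that the ball B(x,R) has a κ-small boundary with respect to μ. -/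
open MeasureTheory Metric Set ENNReal

noncomputable section

variable {n : ℕ}

/-!
Suppose every radius `R ∈ [r, 1.2r]` admits some `s_R ∈ [0, 1]` whose annulus
`R(1 - s_R) < |z - x| < R(1 + s_R)` carries more than `100 s_R M`, where `M = μ(B(x, 3r))`.
Pushing `μ|B(x, 3r)` forward by `z ↦ |z - x|` gives a measure `ν` on `ℝ` of total mass `M`
with `ν([R - R s_R, R + R s_R]) > (50 / r) M · R s_R` for all these `R`. By the Vitali covering
lemma on the line (the weak type (1,1) bound for the maximal function of `ν`), the set of such
`R`, of length `0.2 r`, then has length at most `8 M / ((50 / r) M) = 0.16 r`, a contradiction.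
-/

theorem mul_volume_le_of_lt_measure_closedBall (ν : Measure ℝ) {t : Set ℝ} {δ : ℝ → ℝ} {D : ℝ}
    (hδ : ∀ c ∈ t, δ c ≤ D) {a : ℝ≥0∞}
    (h : ∀ c ∈ t, a * ENNReal.ofReal (δ c) < ν (closedBall c (δ c))) :
    a * volume t ≤ 8 * ν univ := by
  by_cases hν : ν univ = ∞
  · simp [hν]
  obtain ⟨u, hut, hdisj, hcover⟩ :=
    Vitali.exists_disjoint_subfamily_covering_enlargement_closedBall t id δ D hδ 4 (by norm_num)
  have hdisj' : Pairwise (Function.onFun Disjoint fun b : u => closedBall (b : ℝ) (δ b)) :=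
    hdisj.subtype _ _
  have hu : u.Countable := by
    have hpos := Measure.countable_meas_pos_of_disjoint_of_meas_iUnion_ne_top ν
      (fun _ => measurableSet_closedBall) hdisj' (measure_ne_top_of_subset (subset_univ _) hν)
    have hball_pos : ∀ b : u, 0 < ν (closedBall (b : ℝ) (δ b)) := fun b => pos_of_gt (h b (hut b.2))
    simp only [hball_pos, ofPred_true, countable_univ_iff] at hpos
    exact hpos
  have hcover' : t ⊆ ⋃ b ∈ u, closedBall b (4 * δ b) := by
    intro c hc
    obtain ⟨b, hb, hsub⟩ := hcover c hc
    have hδc : 0 ≤ δ c := by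
      by_contra! hneg
      simpa [closedBall_eq_empty.2 hneg] using h c hc
    exact mem_biUnion hb (hsub (mem_closedBall_self hδc))
  calc a * volume t ≤ a * ∑' b : u, volume (closedBall (b : ℝ) (4 * δ b)) := by
        gcongr
        exact (measure_mono hcover').trans (measure_biUnion_le volume hu _)
    _ = 8 * ∑' b : u, a * ENNReal.ofReal (δ b) := by
        simp only [Real.volume_closedBall, ← ENNReal.tsum_mul_left]
        congr 1 with b
        rw [show (2 : ℝ) * (4 * δ b) = 8 * δ b by ring, ENNReal.ofReal_mul (by norm_num),
          ENNReal.ofReal_ofNat]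
        ring
    _ ≤ 8 * ∑' b : u, ν (closedBall (b : ℝ) (δ b)) := by
        gcongr with b
        exact (h b (hut b.2)).le
    _ ≤ 8 * ν univ := by
        gcongr
        exact (tsum_meas_le_meas_iUnion_of_disjoint ν (fun _ => measurableSet_closedBall)
          hdisj').trans (measure_mono (subset_univ _))

theorem mul_volume_le_of_lt_measure_preimage_dist {X : Type*} [PseudoMetricSpace X]
    [MeasurableSpace X] [OpensMeasurableSpace X] (μ : Measure X) (x : X) {t : Set ℝ}
    {δ : ℝ → ℝ} {D : ℝ} (hδ : ∀ c ∈ t, δ c ≤ D) {a : ℝ≥0∞}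
    (h : ∀ c ∈ t, a * ENNReal.ofReal (δ c) < μ ((dist · x) ⁻¹' closedBall c (δ c))) :
    a * volume t ≤ 8 * μ univ := by
  have hdist : Measurable (dist · x : X → ℝ) := (continuous_id.dist continuous_const).measurable
  have := mul_volume_le_of_lt_measure_closedBall (μ.map (dist · x)) hδ fun c hc => by
    rw [Measure.map_apply hdist measurableSet_closedBall]
    exact h c hc
  rwa [Measure.map_apply hdist MeasurableSet.univ, preimage_univ] at this

theorem exists_radius_mem_Icc_measure_annulus_le {X : Type*} [PseudoMetricSpace X]
    [MeasurableSpace X] [OpensMeasurableSpace X] (μ : Measure X) (x : X) {r : ℝ} (hr : 0 < r)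
    (hfin : μ (ball x (3 * r)) ≠ ∞) :
    ∃ R ∈ Icc r (1.2 * r), ∀ s ∈ Icc (0 : ℝ) 1,
      μ {z | R * (1 - s) < dist z x ∧ dist z x < R * (1 + s)}
        ≤ ENNReal.ofReal (100 * s) * μ (ball x (3 * R)) := by
  set M := μ (ball x (3 * r))
  have hsub : ∀ R ∈ Icc r (1.2 * r), ∀ s ∈ Icc (0 : ℝ) 1,
      {z | R * (1 - s) < dist z x ∧ dist z x < R * (1 + s)} ⊆ ball x (3 * r) := by
    intro R hR s hs z hz
    rw [mem_ball]
    nlinarith [hz.2, mul_le_mul hR.2 (by linarith [hs.2] : 1 + s ≤ 2) (by linarith [hs.1])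
      (by linarith)]
  by_contra! hcon
  choose! s hs hlt using hcon
  have hr_mem : r ∈ Icc r (1.2 * r) := ⟨le_rfl, by linarith⟩
  have hM0 : M ≠ 0 :=
    ((pos_of_gt (hlt r hr_mem)).trans_le (measure_mono (hsub r hr_mem _ (hs r hr_mem)))).ne'
  have hbad : ∀ R ∈ Icc r (1.2 * r), ENNReal.ofReal (50 / r) * M * ENNReal.ofReal (R * s R)
      < μ.restrict (ball x (3 * r)) ((dist · x) ⁻¹' closedBall R (R * s R)) := by
    intro R hR
    have hRs : 50 / r * (R * s R) ≤ 100 * s R := by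
      rw [div_mul_eq_mul_div, div_le_iff₀ hr]
      nlinarith [hR.2, (hs R hR).1]
    calc ENNReal.ofReal (50 / r) * M * ENNReal.ofReal (R * s R)
        = ENNReal.ofReal (50 / r * (R * s R)) * M := by
          rw [mul_right_comm, ← ENNReal.ofReal_mul (by positivity)]
      _ ≤ ENNReal.ofReal (100 * s R) * μ (ball x (3 * R)) :=
          mul_le_mul' (ENNReal.ofReal_le_ofReal hRs)
            (measure_mono (ball_subset_ball (by linarith [hR.1])))
      _ < μ.restrict (ball x (3 * r))
            {z | R * (1 - s R) < dist z x ∧ dist z x < R * (1 + s R)} := by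
          rw [Measure.restrict_eq_self μ (hsub R hR (s R) (hs R hR))]
          exact hlt R hR
      _ ≤ μ.restrict (ball x (3 * r)) ((dist · x) ⁻¹' closedBall R (R * s R)) := by
          refine measure_mono fun z hz => ?_
          rw [mem_preimage, Real.closedBall_eq_Icc]
          constructor <;> linarith [hz.1, hz.2]
  have hvol := mul_volume_le_of_lt_measure_preimage_dist _ x (D := 1.2 * r) (fun R hR => by
    nlinarith [hR.2, mul_nonneg (hr.le.trans hR.1) (sub_nonneg.2 (hs R hR).2)]) hbad
  rw [Measure.restrict_apply_univ, Real.volume_Icc, mul_right_comm,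
    ← ENNReal.ofReal_mul (by positivity), show 50 / r * (1.2 * r - r) = 10 by field_simp; norm_num]
    at hvol
  have h10_le_8 : ENNReal.ofReal 10 ≤ 8 := (ENNReal.mul_le_mul_iff_left hM0 hfin).1 hvol
  norm_num at h10_le_8

/-- for a Radon measure μ on ℝⁿ there is κ = κ(n) such that every ball
B(x,r) admits R ∈ [r, 1.2r] with B(x,R) having κ-small boundary. -/
theorem statement9 (n : ℕ) :
    ∃ κ > 0, ∀ (μ : Measure (Rn n)), IsLocallyFiniteMeasure μ →
      ∀ (x : Rn n) (r : ℝ), 0 < r →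
        ∃ R ∈ Set.Icc r (1.2 * r),
          ∀ s ∈ Set.Icc (0:ℝ) 1,
            μ {z | R * (1 - s) < dist z x ∧ dist z x < R * (1 + s)}
              ≤ ENNReal.ofReal (κ * s) * μ (ball x (3 * R)) := by
  exact ⟨100, by norm_num, fun μ _ x r hr =>
    exists_radius_mem_Icc_measure_annulus_le μ x hr measure_ball_lt_top.ne⟩
end
end

section
/- Suppose μ is a non-negative Borel measure on ℝⁿ satisfying μ(B(y,r)) ≤ C₀ r^m for all y ∈ ℝⁿ and r > 0 (a measure of order m in ℝⁿ). Let a > 1 and b > a^m (with b also exceeding a constant multiple of C₀ a^m as needed). Then for every ball B in ℝⁿ there exists s > 1 such that the concentric dilated ball sB is (a,b)-doubling with respect to μ, i.e. μ(a(sB)) ≤ b μ(sB). -/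
open MeasureTheory Metric Set ENNReal

noncomputable section

variable {n : ℕ}

/-!
If no scale t > r were (a,b)-doubling for F(t) = μ(B(x,t)), then starting from a scale t₀ > r with
F(t₀) > 0 we would get b^k F(t₀) ≤ F(a^k t₀) ≤ C₀ t₀^m (a^m)^k for every k, which is impossible
because b > a^m.
-/

theorem pow_mul_le_of_forall_mul_le {F : ℝ → ℝ≥0∞} {a t₀ : ℝ} {c : ℝ≥0∞} (ha : 1 ≤ a)
    (ht₀ : 0 ≤ t₀) (hF : ∀ t ≥ t₀, c * F t ≤ F (a * t)) (k : ℕ) :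
    c ^ k * F t₀ ≤ F (a ^ k * t₀) := by
  induction k with
  | zero => simp
  | succ k ih =>
    calc c ^ (k + 1) * F t₀ = c * (c ^ k * F t₀) := by ring
      _ ≤ c * F (a ^ k * t₀) := by gcongr
      _ ≤ F (a * (a ^ k * t₀)) := hF _ (le_mul_of_one_le_left ht₀ (one_le_pow₀ ha))
      _ = F (a ^ (k + 1) * t₀) := by rw [← mul_assoc, ← pow_succ']

theorem not_forall_pow_mul_le_mul_pow {q b y D : ℝ} (hq : 0 < q) (hqb : q < b) (hy : 0 < y) :
    ¬ ∀ k : ℕ, b ^ k * y ≤ D * q ^ k := by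
  intro h
  obtain ⟨k, hk⟩ := pow_unbounded_of_one_lt (D / y) ((one_lt_div hq).mpr hqb)
  rw [div_pow, lt_div_iff₀ (pow_pos hq k), div_mul_eq_mul_div, div_lt_iff₀ hy] at hk
  linarith [h k]

theorem exists_pos_of_forall_mul_lt {F : ℝ → ℝ≥0∞} {a r : ℝ} {c : ℝ≥0∞} (ha : 1 < a)
    (hr : 0 < r) (hF : ∀ t > r, c * F t < F (a * t)) : ∃ t > r, F t ≠ 0 := by
  by_cases h : F (2 * r) = 0
  · refine ⟨a * (2 * r), by nlinarith, ?_⟩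
    have := hF (2 * r) (by linarith)
    rw [h, mul_zero] at this
    exact this.ne'
  · exact ⟨2 * r, by linarith, h⟩

theorem exists_gt_doubling_of_le_rpow {F : ℝ → ℝ≥0∞} {m a b C r : ℝ} (ha : 1 < a)
    (hb : a ^ m < b) (hr : 0 < r) (hF : ∀ t > 0, F t ≤ ENNReal.ofReal (C * t ^ m)) :
    ∃ t > r, F (a * t) ≤ ENNReal.ofReal b * F t := by
  by_contra! hnot
  obtain ⟨t₀, ht₀r, hFt₀⟩ := exists_pos_of_forall_mul_lt ha hr hnot
  have ht₀ : 0 < t₀ := hr.trans ht₀r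
  have hFt₀_lt_top : F t₀ ≠ ⊤ := ne_top_of_le_ne_top ofReal_ne_top (hF t₀ ht₀)
  have hq : 0 < a ^ m := Real.rpow_pos_of_pos (by linarith) m
  have hb₀ : 0 < b := hq.trans hb
  have hy : 0 < (F t₀).toReal := toReal_pos hFt₀ hFt₀_lt_top
  refine not_forall_pow_mul_le_mul_pow hq hb hy (D := C * t₀ ^ m) fun k => ?_
  have hgrowth : ENNReal.ofReal (b ^ k * (F t₀).toReal)
      ≤ ENNReal.ofReal (C * t₀ ^ m * (a ^ m) ^ k) := by
    calc ENNReal.ofReal (b ^ k * (F t₀).toReal) = ENNReal.ofReal b ^ k * F t₀ := by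
          rw [ofReal_mul (by positivity), ofReal_pow (by linarith), ofReal_toReal hFt₀_lt_top]
      _ ≤ F (a ^ k * t₀) := pow_mul_le_of_forall_mul_le ha.le ht₀.le
          (fun t ht => (hnot t (ht₀r.trans_le ht)).le) k
      _ ≤ ENNReal.ofReal (C * (a ^ k * t₀) ^ m) := hF _ (by positivity)
      _ = ENNReal.ofReal (C * t₀ ^ m * (a ^ m) ^ k) := by
          rw [Real.mul_rpow (by positivity) ht₀.le, ← Real.rpow_pow_comm (by linarith)]
          congr 1
          ring
  exact (ofReal_le_ofReal_iff'.mp hgrowth).resolve_right (not_le.mpr (by positivity))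

theorem statement12_general (n : ℕ) (m a b C₀ : ℝ) (ha : 1 < a) (hb : a ^ m < b)
    (μ : Measure (Rn n))
    (hμ : ∀ (y : Rn n) (r : ℝ), 0 < r → μ (ball y r) ≤ ENNReal.ofReal (C₀ * r ^ m))
    (x : Rn n) (r : ℝ) (hr : 0 < r) :
    ∃ s > 1, μ (ball x (a * (s * r))) ≤ ENNReal.ofReal b * μ (ball x (s * r)) := by
  obtain ⟨t, htr, hdoubling⟩ :=
    exists_gt_doubling_of_le_rpow (F := fun t => μ (ball x t)) ha hb hr (hμ x)
  refine ⟨t / r, (one_lt_div hr).mpr htr, ?_⟩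
  rwa [div_mul_cancel₀ t hr.ne']

/-- if μ has order m in ℝⁿ, a > 1 and b > a^m, then every ball admits a
concentric dilate sB, s > 1, which is (a,b)-doubling. -/
theorem statement12 (n : ℕ) (m a b C₀ : ℝ) (hm : 0 < m) (ha : 1 < a) (hb : a ^ m < b)
    (μ : Measure (Rn n))
    (hμ : ∀ (y : Rn n) (r : ℝ), 0 < r → μ (ball y r) ≤ ENNReal.ofReal (C₀ * r ^ m))
    (x : Rn n) (r : ℝ) (hr : 0 < r) :
    ∃ s > 1, μ (ball x (a * (s * r))) ≤ ENNReal.ofReal b * μ (ball x (s * r)) :=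
  statement12_general n m a b C₀ ha hb μ hμ x r hr
end
end

section
/- Suppose μ is a Radon measure on ℝⁿ, let a > 1 and b > a^m for some m > 0, and let B₁ ⊂ B₂ be two balls with common center x. Assume that none of the balls a^k B₁ is (a,b)-doubling with respect to μ, for those integers k ≥ 0 with B₁ ⊊ a^k B₁ ⊂ B₂. Then ∫_{B₂ \ B₁} |y−x|^{−m} dμ(y) ≤ C(a,b,m) μ(B₂)/r(B₂)^m, where r(B₂) is the radius of B₂ and C(a,b,m) depends only on a, b, m. -/
open MeasureTheory Metric Set ENNReal

noncomputable section

variable {n : ℕ}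

/-!
Let ρ_k = a^k r₁ and choose N with ρ_N ≤ r₂ < a ρ_N. On an annulus with inner radius ρ the
integrand is at most ρ^{-m}, so adding one more annulus costs at most ρ^{-m} μ(B(x, aρ)).
Because no ball B(x, ρ_k), 1 ≤ k < N, is (a,b)-doubling, μ(B(x, ρ_k)) < μ(B(x, ρ_{k+1})) / b: the
measures grow by the factor b while the weights ρ_k^{-m} only shrink by a^m < b. By induction, the
integral over B(x, ρ_k) \ B(x, r₁) is at most C' ρ_k^{-m} μ(B(x, ρ_k)) with C' = a^m b / (b - a^m),
and the outer piece B(x, r₂) \ B(x, ρ_N) adds ρ_N^{-m} μ(B(x, r₂)) ≤ a^m r₂^{-m} μ(B(x, r₂)).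
-/

section Annulus

variable {X : Type*} [PseudoMetricSpace X] [MeasurableSpace X] (μ : Measure X) (x : X) {m : ℝ}

lemma setLIntegral_ball_diff_ball_rpow_le (hm : 0 ≤ m) {ρ : ℝ} (hρ : 0 < ρ) (R : ℝ) :
    ∫⁻ y in ball x R \ ball x ρ, ENNReal.ofReal ((dist y x ^ m)⁻¹) ∂μ
      ≤ ENNReal.ofReal ((ρ ^ m)⁻¹) * μ (ball x R) := by
  calc ∫⁻ y in ball x R \ ball x ρ, ENNReal.ofReal ((dist y x ^ m)⁻¹) ∂μ
      ≤ ∫⁻ _ in ball x R \ ball x ρ, ENNReal.ofReal ((ρ ^ m)⁻¹) ∂μ := by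
        refine setLIntegral_mono measurable_const fun y hy => ENNReal.ofReal_le_ofReal ?_
        have hρy : ρ ≤ dist y x := not_lt.1 hy.2
        exact inv_anti₀ (Real.rpow_pos_of_pos hρ m) (Real.rpow_le_rpow hρ.le hρy hm)
    _ = ENNReal.ofReal ((ρ ^ m)⁻¹) * μ (ball x R \ ball x ρ) := setLIntegral_const _ _
    _ ≤ ENNReal.ofReal ((ρ ^ m)⁻¹) * μ (ball x R) := by gcongr; exact sdiff_subset

lemma setLIntegral_ball_diff_ball_rpow_le_add (hm : 0 ≤ m) (r : ℝ) {ρ : ℝ} (hρ : 0 < ρ)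
    (R : ℝ) :
    ∫⁻ y in ball x R \ ball x r, ENNReal.ofReal ((dist y x ^ m)⁻¹) ∂μ
      ≤ ∫⁻ y in ball x ρ \ ball x r, ENNReal.ofReal ((dist y x ^ m)⁻¹) ∂μ
        + ENNReal.ofReal ((ρ ^ m)⁻¹) * μ (ball x R) := by
  have hsplit : ball x R \ ball x r ⊆ (ball x ρ \ ball x r) ∪ (ball x R \ ball x ρ) := by
    rintro y ⟨hyR, hyr⟩
    by_cases hyρ : y ∈ ball x ρ
    · exact Or.inl ⟨hyρ, hyr⟩
    · exact Or.inr ⟨hyR, hyρ⟩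
  calc _ ≤ _ := lintegral_mono_set hsplit
    _ ≤ _ := lintegral_union_le _ _ _
    _ ≤ _ := by gcongr; exact setLIntegral_ball_diff_ball_rpow_le μ x hm hρ R

/-- The constant `a ^ m * b / (b - a ^ m)` is the fixed point of `c ↦ a ^ m * (c / b + 1)`,
which is how the bound propagates from one radius to the next. -/
lemma setLIntegral_ball_pow_diff_ball_le_of_not_doubling (hm : 0 ≤ m) {a b r : ℝ} (ha : 0 < a)
    (hb : a ^ m < b) (hr : 0 < r) (N : ℕ)
    (hgrowth : ∀ k, 1 ≤ k → k < N →
      ENNReal.ofReal b * μ (ball x (a ^ k * r)) ≤ μ (ball x (a * (a ^ k * r)))) :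
    ∫⁻ y in ball x (a ^ N * r) \ ball x r, ENNReal.ofReal ((dist y x ^ m)⁻¹) ∂μ
      ≤ ENNReal.ofReal (a ^ m * b / (b - a ^ m) * ((a ^ N * r) ^ m)⁻¹)
        * μ (ball x (a ^ N * r)) := by
  have hA : 0 < a ^ m := Real.rpow_pos_of_pos ha m
  have hbA : 0 < b - a ^ m := sub_pos.2 hb
  have hb0 : 0 < b := hA.trans hb
  set C := a ^ m * b / (b - a ^ m)
  induction N with
  | zero => simp
  | succ N ih =>
    set ρ := a ^ N * r
    have hρ : 0 < ρ := by positivity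
    rw [show a ^ (N + 1) * r = a * ρ by ring]
    have hprev : ∫⁻ y in ball x ρ \ ball x r, ENNReal.ofReal ((dist y x ^ m)⁻¹) ∂μ
        ≤ ENNReal.ofReal (C / b * (ρ ^ m)⁻¹) * μ (ball x (a * ρ)) := by
      rcases N.eq_zero_or_pos with rfl | hN
      · simp [ρ]
      calc _ ≤ ENNReal.ofReal (C * (ρ ^ m)⁻¹) * μ (ball x ρ) :=
            ih fun k hk1 hkN => hgrowth k hk1 (by omega)
        _ = ENNReal.ofReal (C / b * (ρ ^ m)⁻¹) * (ENNReal.ofReal b * μ (ball x ρ)) := by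
            rw [← mul_assoc, ← ENNReal.ofReal_mul (by positivity)]
            congr 2
            field_simp
        _ ≤ _ := by gcongr; exact hgrowth N hN (by omega)
    have hC : C / b * (ρ ^ m)⁻¹ + (ρ ^ m)⁻¹ = C * ((a * ρ) ^ m)⁻¹ := by
      rw [Real.mul_rpow ha.le hρ.le]
      simp only [C]
      field_simp
      ring
    calc _ ≤ ∫⁻ y in ball x ρ \ ball x r, ENNReal.ofReal ((dist y x ^ m)⁻¹) ∂μ
          + ENNReal.ofReal ((ρ ^ m)⁻¹) * μ (ball x (a * ρ)) :=
          setLIntegral_ball_diff_ball_rpow_le_add μ x hm r hρ _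
      _ ≤ ENNReal.ofReal (C / b * (ρ ^ m)⁻¹) * μ (ball x (a * ρ))
          + ENNReal.ofReal ((ρ ^ m)⁻¹) * μ (ball x (a * ρ)) := by gcongr
      _ = _ := by
          rw [← add_mul, ← ENNReal.ofReal_add (by positivity) (by positivity), hC]

lemma setLIntegral_ball_diff_ball_rpow_le_of_le_mul (hm : 0 ≤ m) {a c r ρ R : ℝ} (ha : 0 ≤ a)
    (hc : 0 ≤ c) (hρ : 0 < ρ) (hρR : ρ ≤ R) (hRρ : R ≤ a * ρ)
    (hinner : ∫⁻ y in ball x ρ \ ball x r, ENNReal.ofReal ((dist y x ^ m)⁻¹) ∂μ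
      ≤ ENNReal.ofReal (c * (ρ ^ m)⁻¹) * μ (ball x ρ)) :
    ∫⁻ y in ball x R \ ball x r, ENNReal.ofReal ((dist y x ^ m)⁻¹) ∂μ
      ≤ ENNReal.ofReal (a ^ m * (c + 1) / R ^ m) * μ (ball x R) := by
  have hR : 0 < R := hρ.trans_le hρR
  have hweight : (ρ ^ m)⁻¹ ≤ a ^ m / R ^ m := by
    have hRm : R ^ m ≤ a ^ m * ρ ^ m := by
      rw [← Real.mul_rpow ha hρ.le]
      exact Real.rpow_le_rpow hR.le hRρ hm
    rw [le_div_iff₀ (Real.rpow_pos_of_pos hR m)]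
    calc (ρ ^ m)⁻¹ * R ^ m ≤ (ρ ^ m)⁻¹ * (a ^ m * ρ ^ m) := by gcongr
      _ = a ^ m := by field_simp
  calc _ ≤ ∫⁻ y in ball x ρ \ ball x r, ENNReal.ofReal ((dist y x ^ m)⁻¹) ∂μ
        + ENNReal.ofReal ((ρ ^ m)⁻¹) * μ (ball x R) :=
        setLIntegral_ball_diff_ball_rpow_le_add μ x hm r hρ R
    _ ≤ ENNReal.ofReal (c * (ρ ^ m)⁻¹) * μ (ball x R)
        + ENNReal.ofReal ((ρ ^ m)⁻¹) * μ (ball x R) := by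
        gcongr
        exact hinner.trans (by gcongr)
    _ = ENNReal.ofReal ((c + 1) * (ρ ^ m)⁻¹) * μ (ball x R) := by
        rw [← add_mul, ← ENNReal.ofReal_add (by positivity) (by positivity), add_mul, one_mul]
    _ ≤ ENNReal.ofReal (a ^ m * (c + 1) / R ^ m) * μ (ball x R) := by
        gcongr ENNReal.ofReal ?_ * _
        calc (c + 1) * (ρ ^ m)⁻¹ ≤ (c + 1) * (a ^ m / R ^ m) := by gcongr
          _ = a ^ m * (c + 1) / R ^ m := by ring

end Annulus

/-- if no ball a^k B₁ with B₁ ⊊ a^k B₁ ⊂ B₂ is (a,b)-doubling, then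
∫_{B₂ \ B₁} |y−x|^{−m} dμ(y) ≤ C(a,b,m) μ(B₂)/r(B₂)^m. -/
theorem statement13 (m a b : ℝ) (hm : 0 < m) (ha : 1 < a) (hb : a ^ m < b) :
    ∃ C > 0, ∀ (n : ℕ) (μ : Measure (Rn n)), IsLocallyFiniteMeasure μ →
      ∀ (x : Rn n) (r₁ r₂ : ℝ), 0 < r₁ → r₁ ≤ r₂ →
      (∀ k : ℕ, r₁ < a ^ k * r₁ → a ^ k * r₁ ≤ r₂ →
        ¬ (μ (ball x (a * (a ^ k * r₁))) ≤ ENNReal.ofReal b * μ (ball x (a ^ k * r₁)))) →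
      ∫⁻ y in ball x r₂ \ ball x r₁, ENNReal.ofReal ((dist y x ^ m)⁻¹) ∂μ
        ≤ ENNReal.ofReal (C / r₂ ^ m) * μ (ball x r₂) := by
  have ha0 : 0 < a := zero_lt_one.trans ha
  have hA : 0 < a ^ m := Real.rpow_pos_of_pos ha0 m
  have hbA : 0 < b - a ^ m := sub_pos.2 hb
  have hb0 : 0 < b := hA.trans hb
  refine ⟨a ^ m * (a ^ m * b / (b - a ^ m) + 1), by positivity, ?_⟩
  intro n μ _ x r₁ r₂ hr₁ hr₁₂ hnd
  obtain ⟨N, hNr₂, hr₂N⟩ := exists_nat_pow_near ((one_le_div hr₁).2 hr₁₂) ha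
  rw [le_div_iff₀ hr₁] at hNr₂
  rw [div_lt_iff₀ hr₁, pow_succ, mul_comm _ a, mul_assoc] at hr₂N
  have hgrowth : ∀ k, 1 ≤ k → k < N →
      ENNReal.ofReal b * μ (ball x (a ^ k * r₁)) ≤ μ (ball x (a * (a ^ k * r₁))) :=
    fun k hk1 hkN => (not_le.1 (hnd k (lt_mul_left hr₁ (one_lt_pow₀ ha (by omega)))
      ((mul_le_mul_of_nonneg_right (pow_le_pow_right₀ ha.le hkN.le) hr₁.le).trans hNr₂))).le
  exact setLIntegral_ball_diff_ball_rpow_le_of_le_mul μ x hm.le ha0.le (by positivity)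
    (by positivity) hNr₂ hr₂N.le
    (setLIntegral_ball_pow_diff_ball_le_of_not_doubling μ x hm.le ha0 hb hr₁ N hgrowth)
end
end

section
/- Suppose μ is a measure of order m in E, let 0 < s < t, and let f ∈ L¹(μ). Then for all y, y′ ∈ E one has |C_{μ,s}^t f(y) − C_{μ,s}^t f(y′)| ≤ C ‖f‖_{L¹(μ)} s^{−m} σ(Γ_s^t(y) Δ Γ_s^t(y′))^{1/2} (with C depending only on K₁); consequently, since σ(Γ_s(y) Δ Γ_s(y′)) ≲ |y−y′|/s when 10|y−y′| < s, the map y ↦ C_{μ,s}^t f(y) is continuous on E. -/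
open MeasureTheory Metric Set ENNReal

noncomputable section

variable {n : ℕ}

/-- The truncated cone Γ_s^t(y). -/
def truncCone (E : Set (Rn n)) (y : Rn n) (s t : ℝ) : Set (Rn n) :=
  {x ∈ coneAt E y | s < infDist x E ∧ infDist x E ≤ t}

/-!
Off `E`, the size estimate gives `|T_μ f(x)| d(x,E)^α ≤ K₁ d(x,E)^{-m} ‖f‖₁ ≤ K₁ s^{-m} ‖f‖₁`
as soon as `d(x,E) > s`, so the integrands of the two square functions are bounded by
`(K₁ s^{-m} ‖f‖₁)²` where the cones differ; the comparison follows from subadditivity of `√·`.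

For continuity it remains to see `σ(Γ_s^t(w) Δ Γ_s^t(y)) → 0` as `w → y`. By dominated
convergence this reduces to the boundary `{x : |x - y| = 2 d(x,E)}` of the cone being null, which
holds because it is porous: moving from such an `x` towards its nearest point of `E` strictly
increases `|· - y| - 2 d(·,E)`, so every small ball around `x` contains a ball of comparable radius
missing the boundary, and by Lebesgue's density theorem such a set has measure zero.
-/

open Filter Topology
open scoped symmDiff

section Porosity

variable {V : Type*} [NormedAddCommGroup V] [NormedSpace ℝ V]

theorem addHaar_eq_zero_of_porous [FiniteDimensional ℝ V] [MeasurableSpace V]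
    [BorelSpace V] (μ : Measure V) [μ.IsAddHaarMeasure] {N : Set V} {κ : ℝ} (hκ : 0 < κ)
    (hN : ∀ x ∈ N, ∀ᶠ r in 𝓝[>] 0,
      ∃ z, closedBall z (κ * r) ⊆ closedBall x r ∧ Disjoint (closedBall z (κ * r)) N) :
    μ N = 0 := by
  set a : ℝ≥0∞ := ENNReal.ofReal (κ ^ Module.finrank ℝ V)
  have ha : a ≠ 0 := by positivity
  have hratio : ∀ x ∈ N, ∀ᶠ r in 𝓝[>] 0, μ (N ∩ closedBall x r) / μ (closedBall x r) ≤ 1 - a := by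
    intro x hx
    filter_upwards [hN x hx, self_mem_nhdsWithin] with r ⟨z, hsub, hdisj⟩ (hr : 0 < r)
    have hball : μ (closedBall z (κ * r)) = a * μ (closedBall x r) := by
      rw [Measure.addHaar_closedBall_mul μ z hκ.le hr.le, Measure.addHaar_closedBall_center μ x]
    have hadd : μ (N ∩ closedBall x r) + a * μ (closedBall x r) ≤ μ (closedBall x r) := by
      rw [← hball,
        ← measure_union (hdisj.symm.mono_left inter_subset_left) measurableSet_closedBall]
      exact measure_mono (union_subset inter_subset_right hsub)
    refine ENNReal.div_le_of_le_mul ?_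
    rw [ENNReal.sub_mul fun _ _ => measure_closedBall_lt_top.ne, one_mul]
    exact ENNReal.le_sub_of_add_le_right
      (ENNReal.mul_ne_top ofReal_ne_top measure_closedBall_lt_top.ne) hadd
  have hnot : ∀ x ∈ N, ¬ Tendsto (fun r => μ (N ∩ closedBall x r) / μ (closedBall x r))
      (𝓝[>] 0) (𝓝 1) := fun x hx hlim =>
    (le_of_tendsto hlim (hratio x hx)).not_gt (ENNReal.sub_lt_self one_ne_top one_ne_zero ha)
  have hnull := ae_iff.mp (Besicovitch.ae_tendsto_measure_inter_div μ N)
  rw [← Measure.restrict_apply_self]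
  exact measure_mono_null hnot hnull

theorem exists_closedBall_disjoint_setOf_dist_eq_two_mul_infDist [ProperSpace V] {E : Set V}
    (hE : IsClosed E) {x y : V} (hx : 0 < infDist x E) (hxy : dist x y = 2 * infDist x E)
    {r : ℝ} (hr : 0 < r) (hrx : r < infDist x E) :
    ∃ z, closedBall z (8⁻¹ * r) ⊆ closedBall x r ∧
      Disjoint (closedBall z (8⁻¹ * r)) {w | dist w y = 2 * infDist w E} := by
  set d := infDist x E
  have hne : E.Nonempty := nonempty_iff_ne_empty.mpr fun h => by simp [d, h] at hx
  obtain ⟨p, hpE, hpx⟩ := hE.exists_infDist_eq_dist hne x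
  set z := x + (r / (2 * d)) • (p - x)
  have hpx' : ‖p - x‖ = d := by rw [← dist_eq_norm, dist_comm, ← hpx]
  have hzx : dist z x = r / 2 := by
    rw [dist_eq_norm, add_sub_cancel_left, norm_smul, Real.norm_eq_abs, hpx',
      abs_of_pos (by positivity)]
    field_simp
  have hzp : dist z p = d - r / 2 := by
    have : z - p = (1 - r / (2 * d)) • (x - p) := by simp only [z]; module
    rw [dist_eq_norm, this, norm_smul, Real.norm_eq_abs, norm_sub_rev, hpx',
      abs_of_pos (by rw [sub_pos, div_lt_one (by positivity)]; linarith)]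
    field_simp
  refine ⟨z, fun w hw => ?_, Set.disjoint_left.mpr fun w hw hwy => ?_⟩
  · rw [mem_closedBall] at hw ⊢
    linarith [dist_triangle w z x]
  · rw [mem_closedBall] at hw
    have hinf : infDist w E ≤ d - r / 2 + 8⁻¹ * r := by
      linarith [infDist_le_dist_of_mem (x := w) hpE, dist_triangle w z p]
    linarith [dist_triangle x w y, dist_triangle x z w, dist_comm w z, dist_comm x z,
      show dist w y = 2 * infDist w E from hwy]

theorem addHaar_setOf_dist_eq_two_mul_infDist [FiniteDimensional ℝ V] [MeasurableSpace V]
    [BorelSpace V] (μ : Measure V) [μ.IsAddHaarMeasure] {E : Set V} (hE : IsClosed E) (y : V) :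
    μ {x | 0 < infDist x E ∧ dist x y = 2 * infDist x E} = 0 := by
  refine addHaar_eq_zero_of_porous μ (by norm_num : (0 : ℝ) < 8⁻¹) fun x hx => ?_
  filter_upwards [Ioo_mem_nhdsGT hx.1] with r hr
  obtain ⟨z, hsub, hdisj⟩ :=
    exists_closedBall_disjoint_setOf_dist_eq_two_mul_infDist hE hx.1 hx.2 hr.1 hr.2
  exact ⟨z, hsub, hdisj.mono_right fun w hw => hw.2⟩

end Porosity

theorem ENNReal.tendsto_of_le_add_of_le_add {ι : Type*} {l : Filter ι} {F g : ι → ℝ≥0∞}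
    {a : ℝ≥0∞} (hg : Tendsto g l (𝓝 0)) (hle : ∀ᶠ i in l, F i ≤ a + g i)
    (hge : ∀ᶠ i in l, a ≤ F i + g i) : Tendsto F l (𝓝 a) := by
  refine tendsto_of_tendsto_of_tendsto_of_le_of_le' (g := fun i => a - g i) (h := fun i => a + g i)
    ?_ ?_ (hge.mono fun i hi => tsub_le_iff_right.mpr hi) hle
  · simpa using ENNReal.Tendsto.sub tendsto_const_nhds hg (Or.inr zero_ne_top)
  · simpa using tendsto_const_nhds.add hg

theorem rpow_half_setLIntegral_le_add {X : Type*} [MeasurableSpace X] (μ : Measure X)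
    {G : X → ℝ≥0∞} {A A' : Set X} {c : ℝ≥0∞} (hG : ∀ x ∈ A \ A', G x ≤ c ^ 2) :
    (∫⁻ x in A, G x ∂μ) ^ (1/2 : ℝ)
      ≤ (∫⁻ x in A', G x ∂μ) ^ (1/2 : ℝ) + c * μ (A \ A') ^ (1/2 : ℝ) := by
  have hint : ∫⁻ x in A, G x ∂μ ≤ ∫⁻ x in A', G x ∂μ + c ^ 2 * μ (A \ A') :=
    calc ∫⁻ x in A, G x ∂μ ≤ ∫⁻ x in A' ∪ A \ A', G x ∂μ :=
          lintegral_mono_set (union_sdiff_self.symm ▸ subset_union_right)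
      _ ≤ ∫⁻ x in A', G x ∂μ + ∫⁻ x in A \ A', G x ∂μ := lintegral_union_le _ _ _
      _ ≤ ∫⁻ x in A', G x ∂μ + ∫⁻ _ in A \ A', c ^ 2 ∂μ := by
          gcongr _ + ?_
          exact setLIntegral_mono measurable_const hG
      _ = ∫⁻ x in A', G x ∂μ + c ^ 2 * μ (A \ A') := by rw [setLIntegral_const]
  calc (∫⁻ x in A, G x ∂μ) ^ (1/2 : ℝ)
      ≤ (∫⁻ x in A', G x ∂μ + c ^ 2 * μ (A \ A')) ^ (1/2 : ℝ) :=
        ENNReal.rpow_le_rpow hint (by norm_num)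
    _ ≤ (∫⁻ x in A', G x ∂μ) ^ (1/2 : ℝ) + (c ^ 2 * μ (A \ A')) ^ (1/2 : ℝ) :=
        ENNReal.rpow_add_le_add_rpow _ _ (by norm_num) (by norm_num)
    _ = (∫⁻ x in A', G x ∂μ) ^ (1/2 : ℝ) + c * μ (A \ A') ^ (1/2 : ℝ) := by
        rw [ENNReal.mul_rpow_of_nonneg _ _ (by norm_num), ← ENNReal.rpow_natCast,
          ← ENNReal.rpow_mul]
        norm_num

section Cones

variable {n : ℕ} {E : Set (Rn n)}

theorem measurableSet_truncCone (hE : IsClosed E) (y : Rn n) (s t : ℝ) :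
    MeasurableSet (truncCone E y s t) := by
  have hd : Measurable fun x : Rn n => infDist x E := (continuous_infDist_pt E).measurable
  exact (hE.measurableSet.compl.inter
    (measurableSet_lt (measurable_id.dist measurable_const) (hd.const_mul 2))).inter
    ((measurableSet_lt measurable_const hd).inter (measurableSet_le hd measurable_const))

theorem sigmaE_absolutelyContinuous : sigmaE E ≪ volume :=
  (Measure.absolutelyContinuous_of_le Measure.restrict_le_self).trans
    (withDensity_absolutelyContinuous _ _)

theorem sigmaE_inter_closedBall_lt_top {s : ℝ} (hs : 0 < s) (y : Rn n) (R : ℝ) :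
    sigmaE E ({x | s < infDist x E} ∩ closedBall y R) < ∞ := by
  set B := {x | s < infDist x E} ∩ closedBall y R
  have hB : MeasurableSet B :=
    (measurableSet_lt measurable_const (continuous_infDist_pt E).measurable).inter
      measurableSet_closedBall
  calc sigmaE E B
      ≤ volume.withDensity (fun x => ENNReal.ofReal ((infDist x E ^ n)⁻¹)) B :=
        Measure.restrict_apply_le _ _
    _ = ∫⁻ x in B, ENNReal.ofReal ((infDist x E ^ n)⁻¹) := withDensity_apply _ hB
    _ ≤ ∫⁻ _ in B, ENNReal.ofReal ((s ^ n)⁻¹) :=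
        setLIntegral_mono measurable_const fun x hx =>
          ENNReal.ofReal_le_ofReal (inv_anti₀ (by positivity) (pow_le_pow_left₀ hs.le hx.1.le n))
    _ = ENNReal.ofReal ((s ^ n)⁻¹) * volume B := setLIntegral_const _ _
    _ < ∞ := ENNReal.mul_lt_top ofReal_lt_top
        ((measure_mono inter_subset_right).trans_lt measure_closedBall_lt_top)

variable {S : Rn n → Rn n → ℂ} {m α K₁ : ℝ}

theorem enorm_integral_mul_infDist_rpow_le (hE : IsClosed E) (hS : KernelSize E S m α K₁)
    (hm : 0 ≤ m) (hα : 0 ≤ α) (hK₁ : 0 ≤ K₁) (μ : Measure (Rn n)) (f : Rn n → ℂ) {s : ℝ}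
    (hs : 0 < s) {x : Rn n} (hx : x ∉ E) (hsx : s < infDist x E) :
    ‖∫ z in E, S x z * f z ∂μ‖ₑ * ENNReal.ofReal (infDist x E ^ α)
      ≤ ENNReal.ofReal (K₁ * s ^ (-m)) * ∫⁻ z, ‖f z‖ₑ ∂μ := by
  set d := infDist x E
  have hd : 0 < d := hs.trans hsx
  have hkernel : ∀ z ∈ E, ‖S x z * f z‖ₑ ≤ ENNReal.ofReal (K₁ * d ^ (-(m + α))) * ‖f z‖ₑ := by
    intro z hz
    rw [enorm_mul, ← ofReal_norm]
    gcongr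
    refine (hS x hx z hz).trans ?_
    gcongr K₁ * ?_
    exact Real.rpow_le_rpow_of_nonpos hd (infDist_le_dist_of_mem hz) (by linarith)
  have hT : ‖∫ z in E, S x z * f z ∂μ‖ₑ
      ≤ ENNReal.ofReal (K₁ * d ^ (-(m + α))) * ∫⁻ z, ‖f z‖ₑ ∂μ :=
    calc ‖∫ z in E, S x z * f z ∂μ‖ₑ ≤ ∫⁻ z in E, ‖S x z * f z‖ₑ ∂μ :=
          enorm_integral_le_lintegral_enorm _
      _ ≤ ∫⁻ z in E, ENNReal.ofReal (K₁ * d ^ (-(m + α))) * ‖f z‖ₑ ∂μ :=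
          setLIntegral_mono' hE.measurableSet hkernel
      _ ≤ ENNReal.ofReal (K₁ * d ^ (-(m + α))) * ∫⁻ z, ‖f z‖ₑ ∂μ := by
          rw [lintegral_const_mul' _ _ ofReal_ne_top]
          gcongr
          exact Measure.restrict_le_self
  have hexp : K₁ * d ^ (-(m + α)) * d ^ α = K₁ * d ^ (-m) := by
    rw [mul_assoc, ← Real.rpow_add hd]
    ring_nf
  calc ‖∫ z in E, S x z * f z ∂μ‖ₑ * ENNReal.ofReal (d ^ α)
      ≤ ENNReal.ofReal (K₁ * d ^ (-(m + α))) * (∫⁻ z, ‖f z‖ₑ ∂μ) * ENNReal.ofReal (d ^ α) := by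
        gcongr
    _ = ENNReal.ofReal (K₁ * d ^ (-m)) * ∫⁻ z, ‖f z‖ₑ ∂μ := by
        rw [mul_right_comm, ← ENNReal.ofReal_mul (by positivity), hexp]
    _ ≤ ENNReal.ofReal (K₁ * s ^ (-m)) * ∫⁻ z, ‖f z‖ₑ ∂μ := by
        gcongr ENNReal.ofReal (K₁ * ?_) * _
        exact Real.rpow_le_rpow_of_nonpos hs hsx.le (by linarith)

theorem coneSFOn_truncCone_le_add (hE : IsClosed E) (hS : KernelSize E S m α K₁) (hm : 0 ≤ m)
    (hα : 0 ≤ α) (hK₁ : 0 ≤ K₁) (μ : Measure (Rn n)) (f : Rn n → ℂ) {s : ℝ} (hs : 0 < s)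
    (t : ℝ) (y y' : Rn n) :
    coneSFOn E S α μ f (truncCone E y s t)
      ≤ coneSFOn E S α μ f (truncCone E y' s t)
        + ENNReal.ofReal (K₁ * s ^ (-m)) * (∫⁻ z, ‖f z‖ₑ ∂μ)
          * sigmaE E (truncCone E y s t ∆ truncCone E y' s t) ^ (1/2 : ℝ) := by
  refine (rpow_half_setLIntegral_le_add (A' := truncCone E y' s t)
    (c := ENNReal.ofReal (K₁ * s ^ (-m)) * ∫⁻ z, ‖f z‖ₑ ∂μ) _ fun x hx => ?_).trans ?_
  · obtain ⟨⟨⟨hxE, -⟩, hsx, -⟩, -⟩ := hx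
    have hd : 0 < infDist x E := hs.trans hsx
    have hweight :
        ENNReal.ofReal (infDist x E ^ (2 * α)) = ENNReal.ofReal (infDist x E ^ α) ^ 2 := by
      rw [← ENNReal.ofReal_pow (by positivity), ← Real.rpow_natCast, ← Real.rpow_mul hd.le]
      ring_nf
    rw [hweight, ← mul_pow]
    gcongr ?_ ^ 2
    exact enorm_integral_mul_infDist_rpow_le hE hS hm hα hK₁ μ f hs hxE hsx
  · gcongr _ + _ * sigmaE E ?_ ^ _
    exact subset_union_left

theorem eventually_mem_truncCone_iff {x y : Rn n} (h : dist x y ≠ 2 * infDist x E) (s t : ℝ) :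
    ∀ᶠ w in 𝓝 y, x ∈ truncCone E w s t ↔ x ∈ truncCone E y s t := by
  have hdist : Continuous (dist x) := continuous_const.dist continuous_id
  have hcone : ∀ᶠ w in 𝓝 y, dist x w < 2 * infDist x E ↔ dist x y < 2 * infDist x E := by
    rcases h.lt_or_gt with hlt | hgt
    · filter_upwards [hdist.continuousAt.eventually_lt continuousAt_const hlt] with w hw
      exact iff_of_true hw hlt
    · filter_upwards [continuousAt_const.eventually_lt hdist.continuousAt hgt] with w hw
      exact iff_of_false (lt_asymm hw) (lt_asymm hgt)
  filter_upwards [hcone] with w hw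
  simp only [truncCone, coneAt, mem_ofPred_eq, hw]

theorem tendsto_sigmaE_symmDiff_truncCone (hE : IsClosed E) {s : ℝ} (hs : 0 < s) (t : ℝ)
    (y : Rn n) :
    Tendsto (fun w => sigmaE E (truncCone E w s t ∆ truncCone E y s t)) (𝓝 y) (𝓝 0) := by
  set B := {x | s < infDist x E} ∩ closedBall y (2 * t + 1)
  have hsub : ∀ w ∈ closedBall y 1, truncCone E w s t ⊆ B := by
    intro w hw x hx
    refine ⟨hx.2.1, ?_⟩
    rw [mem_closedBall] at hw ⊢
    linarith [dist_triangle x w y, hx.1.2, hx.2.2]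
  have hbdry :=
    sigmaE_absolutelyContinuous (E := E) (addHaar_setOf_dist_eq_two_mul_infDist volume hE y)
  have hlim : ∀ᵐ x ∂sigmaE E, ∀ᶠ w in 𝓝 y,
      x ∈ truncCone E w s t ∆ truncCone E y s t ↔ x ∈ (∅ : Set (Rn n)) := by
    filter_upwards [measure_eq_zero_iff_ae_notMem.mp hbdry] with x hx
    have hiff : ∀ᶠ w in 𝓝 y, x ∈ truncCone E w s t ↔ x ∈ truncCone E y s t := by
      by_cases hsx : s < infDist x E
      · exact eventually_mem_truncCone_iff (fun h => hx ⟨hs.trans hsx, h⟩) s t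
      · exact Eventually.of_forall fun w => iff_of_false (fun h => hsx h.2.1) (fun h => hsx h.2.1)
    filter_upwards [hiff] with w hw
    simp [mem_symmDiff, hw]
  simpa using tendsto_measure_of_ae_tendsto_indicator (𝓝 y) MeasurableSet.empty
    (fun w => (measurableSet_truncCone hE w s t).symmDiff (measurableSet_truncCone hE y s t))
    ((measurableSet_lt measurable_const (continuous_infDist_pt E).measurable).inter
      measurableSet_closedBall)
    (sigmaE_inter_closedBall_lt_top hs y _).ne
    (by
      filter_upwards [closedBall_mem_nhds y one_pos] with w hw
      exact symmDiff_subset_union.trans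
        (union_subset (hsub w hw) (hsub y (mem_closedBall_self zero_le_one))))
    hlim

theorem continuous_coneSFOn_truncCone (hE : IsClosed E) (hS : KernelSize E S m α K₁)
    (hm : 0 ≤ m) (hα : 0 ≤ α) (hK₁ : 0 ≤ K₁) {μ : Measure (Rn n)} {f : Rn n → ℂ}
    (hf : HasFiniteIntegral f μ) {s : ℝ} (hs : 0 < s) (t : ℝ) :
    Continuous fun y => coneSFOn E S α μ f (truncCone E y s t) := by
  refine continuous_iff_continuousAt.mpr fun y => ?_
  set c := ENNReal.ofReal (K₁ * s ^ (-m)) * ∫⁻ z, ‖f z‖ₑ ∂μ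
  have hsmall : Tendsto (fun w => c * sigmaE E (truncCone E w s t ∆ truncCone E y s t) ^ (1/2 : ℝ))
      (𝓝 y) (𝓝 0) := by
    have := ((ENNReal.continuous_rpow_const (y := 1 / 2)).tendsto 0).comp
      (tendsto_sigmaE_symmDiff_truncCone hE hs t y)
    simpa using ENNReal.Tendsto.const_mul this (Or.inr (mul_ne_top ofReal_ne_top hf.ne))
  refine ENNReal.tendsto_of_le_add_of_le_add hsmall (Eventually.of_forall fun w => ?_)
    (Eventually.of_forall fun w => ?_)
  · exact coneSFOn_truncCone_le_add hE hS hm hα hK₁ μ f hs t w y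
  · rw [symmDiff_comm]
    exact coneSFOn_truncCone_le_add hE hS hm hα hK₁ μ f hs t y w

end Cones

/-- |C_{μ,s}^t f(y) − C_{μ,s}^t f(y′)| ≤ C ‖f‖_{L¹(μ)} s^{−m}
σ(Γ_s^t(y) Δ Γ_s^t(y′))^{1/2} with C = C(K₁); consequently y ↦ C_{μ,s}^t f(y) is
continuous on E. -/
theorem statement17 (K₁ : ℝ) (hK₁ : 0 < K₁) :
    ∃ C > 0, ∀ (n : ℕ) (m α C₀ : ℝ), 0 < m → α ∈ Set.Ioc (0:ℝ) 1 →
      ∀ (E : Set (Rn n)), IsClosed E →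
      ∀ (S : Rn n → Rn n → ℂ), KernelSize E S m α K₁ →
      ∀ (μ : Measure (Rn n)), OrderM E μ m C₀ →
      ∀ (s t : ℝ), 0 < s → s < t →
      ∀ (f : Rn n → ℂ), Integrable f μ →
        (∀ y ∈ E, ∀ y' ∈ E,
          coneSFOn E S α μ f (truncCone E y s t)
            ≤ coneSFOn E S α μ f (truncCone E y' s t)
              + ENNReal.ofReal (C * s ^ (-m)) * (∫⁻ z, (‖f z‖₊ : ℝ≥0∞) ∂μ)
                * (sigmaE E ((truncCone E y s t \ truncCone E y' s t) ∪
                    (truncCone E y' s t \ truncCone E y s t))) ^ (1/2 : ℝ)) ∧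
        ContinuousOn (fun y => coneSFOn E S α μ f (truncCone E y s t)) E := by
  refine ⟨K₁, hK₁, fun n m α C₀ hm hα E hE S hS μ _ s t hs _ f hf => ⟨fun y _ y' _ => ?_, ?_⟩⟩
  · exact coneSFOn_truncCone_le_add hE hS hm.le hα.1.le hK₁.le μ f hs t y y'
  · exact (continuous_coneSFOn_truncCone hE hS hm.le hα.1.le hK₁.le hf.2 hs t).continuousOn
end
end

section
/- Let B̄_1 = B̄(x_1,r_1), …, B̄_K = B̄(x_K,r_K) be finitely many closed balls in ℝⁿ with pairwise distinct centers x_i. Define A_1 := ∂(⋃_{j=1}^K B̄_j) ∩ ∂B̄_1 and, for i ∈ {2,…,K}, A_i := {x ∈ ∂(⋃_{j=1}^K B̄_j) : x ∈ ∂B̄_i \ (⋃_{j=1}^{i−1} ∂B̄_j)}. For each i set V_i := {x ∈ ℝⁿ : x = (1−λ)x_i + λa for some a ∈ A_i and λ ∈ [0,1]}. Then V_i ∩ V_j = ∅ whenever i ≠ j. -/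
open MeasureTheory Metric Set ENNReal

noncomputable section

variable {n : ℕ}

/-- The set A_i from the geometric argument: points of the boundary of the union of the
balls that lie on ∂B̄_i but on no earlier ∂B̄_j. (For i = 0 this is
∂(⋃ B̄_j) ∩ ∂B̄_0, matching the definition of A_1.) -/
def Aset {n K : ℕ} (x : Fin K → Rn n) (r : Fin K → ℝ) (i : Fin K) : Set (Rn n) :=
  frontier (⋃ j, closedBall (x j) (r j)) ∩
    (frontier (closedBall (x i) (r i)) \ ⋃ j, ⋃ (_ : j < i), frontier (closedBall (x j) (r j)))

/-- The set V_i: points on segments from the center x_i to points of A_i. -/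
def Vset {n K : ℕ} (x : Fin K → Rn n) (r : Fin K → ℝ) (i : Fin K) : Set (Rn n) :=
  {z | ∃ a ∈ Aset x r i, ∃ lam ∈ Set.Icc (0:ℝ) 1, z = (1 - lam) • x i + lam • a}

/-!
If `z` lies on the segments `[xᵢ, a]` and `[xⱼ, b]` with `a ∈ Aᵢ`, `b ∈ Aⱼ`, then `a` and `b`,
lying on the boundary of the union, are outside every open ball, so `|b - xⱼ| ≤ rⱼ ≤ |a - xⱼ|`
and `|a - xᵢ| ≤ rᵢ ≤ |b - xᵢ|`. Adding the two triangle inequalities through `z` forces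
equality in both, so by strict convexity `z` also lies on `[a, xⱼ]` and `[b, xᵢ]`, and
`|z - a| = |z - b|`. Unless `z = xᵢ = xⱼ`, this makes `a` and `b` two points at the same
distance from `z` on the same ray, hence `a = b`, which the definition of the `Aₖ` forbids.
-/

open Convex

section Segment

variable {E : Type*} [NormedAddCommGroup E] [NormedSpace ℝ E]

lemma eq_of_mem_segment_of_dist_eq {a b c z : E} (ha : z ∈ [a -[ℝ] c]) (hb : z ∈ [b -[ℝ] c])
    (hzc : z ≠ c) (hab : dist z a = dist z b) : a = b := by
  rw [mem_segment_iff_sameRay] at ha hb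
  have hray : SameRay ℝ (z - a) (z - b) :=
    ha.trans hb.symm fun h => absurd (sub_eq_zero.mp h).symm hzc
  rw [dist_eq_norm, dist_eq_norm] at hab
  exact sub_right_injective (hray.eq_of_norm_eq hab)

variable [StrictConvexSpace ℝ E]

lemma eq_or_eq_of_mem_segment_of_mem_segment {p q a b z : E}
    (hza : z ∈ [p -[ℝ] a]) (hzb : z ∈ [q -[ℝ] b])
    (hbq : dist b q ≤ dist a q) (hap : dist a p ≤ dist b p) : a = b ∨ p = q := by
  have hpa := dist_add_dist_of_mem_segment hza
  have hqb := dist_add_dist_of_mem_segment hzb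
  rw [dist_comm p z, dist_comm p a] at hpa
  rw [dist_comm q z, dist_comm q b] at hqb
  have haq := dist_triangle_left a q z
  have hbp := dist_triangle_left b p z
  have hzaq : z ∈ [a -[ℝ] q] :=
    mem_segment_iff_wbtw.mpr (dist_add_dist_eq_iff.mp (by linarith [dist_comm a z]))
  have hzbp : z ∈ [b -[ℝ] p] :=
    mem_segment_iff_wbtw.mpr (dist_add_dist_eq_iff.mp (by linarith [dist_comm b z]))
  have hab : dist z a = dist z b := by linarith
  rcases eq_or_ne z q with rfl | hzq
  · rcases eq_or_ne z p with rfl | hzp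
    · exact Or.inr rfl
    · exact Or.inl (eq_of_mem_segment_of_dist_eq (segment_symm ℝ p a ▸ hza) hzbp hzp hab)
  · exact Or.inl (eq_of_mem_segment_of_dist_eq hzaq (segment_symm ℝ q b ▸ hzb) hzq hab)

end Segment

lemma le_dist_of_mem_frontier_iUnion_closedBall {X ι : Type*} [PseudoMetricSpace X]
    {c : ι → X} {r : ι → ℝ} {a : X} (ha : a ∈ frontier (⋃ j, closedBall (c j) (r j)))
    (k : ι) : r k ≤ dist a (c k) := by
  have hball : ball (c k) (r k) ⊆ interior (⋃ j, closedBall (c j) (r j)) :=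
    interior_maximal (ball_subset_closedBall.trans (subset_iUnion_of_subset k subset_rfl))
      isOpen_ball
  by_contra! h
  exact ha.2 (hball (mem_ball.mpr h))

section Balls

variable {K : ℕ} {x : Fin K → Rn n} {r : Fin K → ℝ}

lemma dist_le_of_mem_Aset {i : Fin K} {a : Rn n} (ha : a ∈ Aset x r i) : dist a (x i) ≤ r i :=
  mem_closedBall.mp (isClosed_closedBall.frontier_subset ha.2.1)

lemma le_dist_of_mem_Aset {i : Fin K} {a : Rn n} (ha : a ∈ Aset x r i) (k : Fin K) :
    r k ≤ dist a (x k) :=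
  le_dist_of_mem_frontier_iUnion_closedBall ha.1 k

lemma disjoint_Aset {i j : Fin K} (hij : i ≠ j) : Disjoint (Aset x r i) (Aset x r j) := by
  rcases hij.lt_or_gt with h | h
  · exact disjoint_left.mpr fun a ha hb => hb.2.2 (mem_biUnion h ha.2.1)
  · exact disjoint_right.mpr fun a hb ha => ha.2.2 (mem_biUnion h hb.2.1)

lemma mem_Vset_iff {i : Fin K} {z : Rn n} :
    z ∈ Vset x r i ↔ ∃ a ∈ Aset x r i, z ∈ [x i -[ℝ] a] := by
  simp only [Vset, segment_eq_image, mem_ofPred_eq, mem_image, eq_comm]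

end Balls

/-- the sets V_i are pairwise disjoint. -/
theorem statement18 (n K : ℕ) (x : Fin K → Rn n) (r : Fin K → ℝ)
    (hx : Function.Injective x) :
    ∀ i j : Fin K, i ≠ j → Vset x r i ∩ Vset x r j = ∅ := by
  intro i j hij
  refine eq_empty_iff_forall_notMem.mpr fun z ⟨hzi, hzj⟩ => ?_
  obtain ⟨a, ha, hza⟩ := mem_Vset_iff.mp hzi
  obtain ⟨b, hb, hzb⟩ := mem_Vset_iff.mp hzj
  rcases eq_or_eq_of_mem_segment_of_mem_segment hza hzb
      ((dist_le_of_mem_Aset hb).trans (le_dist_of_mem_Aset ha j))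
      ((dist_le_of_mem_Aset ha).trans (le_dist_of_mem_Aset hb i)) with rfl | hxij
  · exact disjoint_left.mp (disjoint_Aset hij) ha hb
  · exact hij (hx hxij)
end
end
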